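/- arXiv:1106.1389 — 9 statements merged into one kernel-verified Lean document; each statement's English description precedes it below -/
import Mathlib

section
/- Let A be a pointed commutative monoid and S a multiplicatively closed subset of A with 0 ∉ S. Then there exists a prime ideal 𝔭 of A such that the localization S⁻¹A is isomorphic to the localization A_𝔭 (i.e., the localization at the complement of 𝔭). -/
/-- An ideal of a pointed commutative monoid: a subset containing `0` and
stable under multiplication by arbitrary elements. -/
def IsMonIdeal {A : Type*} [CommMonoidWithZero A] (I : Set A) : Prop :=
  (0 : A) ∈ I ∧ ∀ a x : A, x ∈ I → a * x ∈ I

/-- A prime ideal: a proper ideal whose complement is multiplicatively closed. -/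
def IsPrimeMonIdeal {A : Type*} [CommMonoidWithZero A] (I : Set A) : Prop :=
  IsMonIdeal I ∧ I ≠ Set.univ ∧ ∀ a b : A, a * b ∈ I → a ∈ I ∨ b ∈ I

/-- The complement of a prime ideal, as a submonoid. -/
def primeMonCompl {A : Type*} [CommMonoidWithZero A] (I : Set A)
    (hI : IsPrimeMonIdeal I) : Submonoid A where
  carrier := Iᶜ
  one_mem' := by
    intro h1
    exact hI.2.1 (Set.eq_univ_of_forall fun a => by
      simpa using hI.1.2 a 1 h1)
  mul_mem' := by
    intro a b ha hb hab
    rcases hI.2.2 a b hab with h | h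
    · exact ha h
    · exact hb h


/-!
The complement of the saturation `{a | ∃ b, a * b ∈ S}` of `S` is a prime ideal, and localizing
at the saturation changes nothing: an element dividing an element of `S` already becomes a unit
in `S⁻¹A`.
-/

namespace Submonoid.LocalizationMap

variable {M N : Type*} [CommMonoid M] [CommMonoid N] {S T : Submonoid M}

def ofLE (f : S.LocalizationMap N) (hST : S ≤ T) (hT : ∀ t ∈ T, IsUnit (f t)) :
    T.LocalizationMap N where
  toMulHom := f.toMulHom
  isLocalizationMap :=
    { map_units t := hT t t.2
      surj z := let ⟨⟨x, s⟩, hz⟩ := f.surj z; ⟨⟨x, ⟨s, hST s.2⟩⟩, hz⟩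
      exists_of_eq hxy := let ⟨c, hc⟩ := f.exists_of_eq hxy; ⟨⟨c, hST c.2⟩, hc⟩ }

def atSaturation (f : S.LocalizationMap N) : S.saturation.toSubmonoid.LocalizationMap N :=
  f.ofLE le_toSubmonoid_saturation fun _ ht ↦
    f.map_isUnit_iff.mpr (mem_saturation_iff_exists_dvd.mp ht)

end Submonoid.LocalizationMap

noncomputable def Localization.mulEquivSaturation {M : Type*} [CommMonoid M] (S : Submonoid M) :
    Localization S ≃* Localization S.saturation.toSubmonoid :=
  (Localization.monoidOf S).atSaturation.mulEquivOfLocalizations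
    (Localization.monoidOf S.saturation.toSubmonoid)

section PointedMonoid

variable {A : Type*} [CommMonoidWithZero A]

theorem Submonoid.zero_mem_saturation_iff {S : Submonoid A} : (0 : A) ∈ S.saturation ↔ 0 ∈ S := by
  simp [mem_saturation_iff]

theorem isPrimeMonIdeal_compl {T : SaturatedSubmonoid A} (hT : (0 : A) ∉ T) :
    IsPrimeMonIdeal (T : Set A)ᶜ :=
  ⟨⟨hT, fun _ _ hx hax ↦ hx (T.mulSaturated hax).2⟩,
    fun h ↦ Set.eq_univ_iff_forall.mp h 1 (one_mem T),
    fun _ _ hab ↦ not_and_or.mp fun h ↦ hab (mul_mem h.1 h.2)⟩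

theorem primeMonCompl_compl {T : SaturatedSubmonoid A} (hT : IsPrimeMonIdeal (T : Set A)ᶜ) :
    primeMonCompl (T : Set A)ᶜ hT = T.toSubmonoid :=
  SetLike.coe_injective (compl_compl _)

end PointedMonoid

/-- For every multiplicatively closed subset `S` of a pointed
commutative monoid `A` with `0 ∉ S`, there is a prime ideal `𝔭` of `A` such
that the localization `S⁻¹A` is isomorphic to the localization `A_𝔭`
(the localization at the complement of `𝔭`). -/
theorem exists_prime_localization_eq {A : Type*} [CommMonoidWithZero A]
    (S : Submonoid A) (hS : (0 : A) ∉ S) :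
    ∃ (I : Set A) (hI : IsPrimeMonIdeal I),
      Nonempty (Localization S ≃* Localization (primeMonCompl I hI)) := by
  have hI := isPrimeMonIdeal_compl (Submonoid.zero_mem_saturation_iff.not.mpr hS)
  refine ⟨_, hI, ?_⟩
  rw [primeMonCompl_compl]
  exact ⟨Localization.mulEquivSaturation S⟩
end

section
/- If A is a finitely generated pointed commutative monoid, generated by x₁,…,x_m, then A has at most 2^m prime ideals. In particular, the prime spectrum MSpec(A) is finite. -/
lemma one_notin_prime {A : Type*} [CommMonoidWithZero A] {I : Set A}
    (hI : IsPrimeMonIdeal I) : (1 : A) ∉ I := by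
  intro h1
  apply hI.2.1
  ext a
  simp only [Set.mem_univ, iff_true]
  simpa using hI.1.2 a 1 h1

lemma prime_subset {A : Type*} [CommMonoidWithZero A]
    (m : ℕ) (x : Fin m → A)
    (hgen : ∀ a : A, a = 0 ∨ a ∈ Submonoid.closure (Set.range x))
    {I J : Set A} (hI : IsPrimeMonIdeal I) (hJ : IsPrimeMonIdeal J)
    (h : ∀ i, x i ∈ I → x i ∈ J) : I ⊆ J := by
  intro a ha
  rcases hgen a with rfl | hc
  · exact hJ.1.1
  · induction hc using Submonoid.closure_induction with
    | mem b hb =>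
      obtain ⟨i, rfl⟩ := hb
      exact h i ha
    | one => exact absurd ha (one_notin_prime hI)
    | mul b c hb hc ihb ihc =>
      rcases hI.2.2 b c ha with hb' | hc'
      · have := ihb hb'
        simpa [mul_comm] using hJ.1.2 c b this
      · exact hJ.1.2 b c (ihc hc')

/-- If the pointed commutative monoid `A` is generated by
`x₁, …, x_m` (every element is `0` or a product of the generators), then `A`
has at most `2^m` prime ideals; in particular `MSpec A` is finite. -/
theorem card_primes_le_of_fg {A : Type*} [CommMonoidWithZero A]
    (m : ℕ) (x : Fin m → A)
    (hgen : ∀ a : A, a = 0 ∨ a ∈ Submonoid.closure (Set.range x)) :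
    {I : Set A | IsPrimeMonIdeal I}.Finite ∧
      Nat.card {I : Set A | IsPrimeMonIdeal I} ≤ 2 ^ m := by
  set f : {I : Set A | IsPrimeMonIdeal I} → Set (Fin m) :=
    fun I => {i | x i ∈ (I : Set A)} with hf
  have hinj : Function.Injective f := by
    rintro ⟨I, hI⟩ ⟨J, hJ⟩ hIJ
    simp only [hf, Set.ext_iff, Set.mem_setOf_eq] at hIJ
    ext1
    exact le_antisymm
      (prime_subset m x hgen hI hJ (fun i => (hIJ i).mp))
      (prime_subset m x hgen hJ hI (fun i => (hIJ i).mpr))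
  have hfin : Finite {I : Set A | IsPrimeMonIdeal I} := Finite.of_injective f hinj
  refine ⟨Set.finite_coe_iff.mp hfin, ?_⟩
  calc Nat.card {I : Set A | IsPrimeMonIdeal I} ≤ Nat.card (Set (Fin m)) :=
        Nat.card_le_card_of_injective f hinj
    _ = 2 ^ m := by simp [Nat.card_eq_fintype_card]
end

section
/- Let A →f B be a morphism of pointed commutative monoids with B finitely generated as a monoid over A. If f is integral (for every b ∈ B some power bⁿ, n ≥ 1, lies in the image of A), then f is finite (there exist b₁,…,b_n ∈ B with B = ⋃ᵢ f(A)·bᵢ). -/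
/-- Let `f : A → B` be a morphism of pointed commutative monoids
with `B` finitely generated over `A` (by the image of `f` together with the
finite set `s`). If `f` is integral (every `b ∈ B` has a power `bⁿ`, `n ≥ 1`,
in the image of `A`), then `f` is finite: there are finitely many
`b₁, …, b_n ∈ B` with `B = ⋃ᵢ f(A)·bᵢ`. -/
theorem integral_implies_finite {A B : Type*} [CommMonoidWithZero A]
    [CommMonoidWithZero B] (f : A →*₀ B) (s : Finset B)
    (hfg : ∀ b : B, b ∈ Submonoid.closure (Set.range f ∪ ↑s))
    (hint : ∀ b : B, ∃ n : ℕ, 1 ≤ n ∧ b ^ n ∈ Set.range f) :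
    ∃ t : Finset B, ∀ x : B, ∃ b ∈ t, ∃ a : A, x = f a * b := by
  classical
  have hint' : ∀ b : B, ∃ n : ℕ, ∃ a : A, 1 ≤ n ∧ f a = b ^ n := by
    intro b
    obtain ⟨m, hm, c, hc⟩ := hint b
    exact ⟨m, c, hm, hc⟩
  choose n a hn ha using hint'
  -- so f (a b) = b ^ n b
  have key : ∀ b : B, ∃ a0 : A, ∃ e : ↑s → ℕ, b = f a0 * ∏ g : ↑s, (g : B) ^ e g := by
    intro b
    have hb := hfg b
    induction hb using Submonoid.closure_induction with
    | mem x hx =>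
      rcases hx with ⟨a0, rfl⟩ | hx
      · exact ⟨a0, 0, by simp⟩
      · refine ⟨1, fun g => if g = (⟨x, hx⟩ : ↑s) then 1 else 0, ?_⟩
        rw [map_one, one_mul]
        rw [Finset.prod_congr rfl (fun (g : {x // x ∈ s}) _ => by
          show (g : B) ^ (if g = (⟨x, hx⟩ : ↑s) then 1 else 0) = if g = (⟨x, hx⟩ : ↑s) then (g : B) else 1
          split <;> simp)]
        simp
    | one => exact ⟨1, 0, by simp⟩
    | mul x y _ _ hx hy =>
      obtain ⟨ax, ex, hx⟩ := hx
      obtain ⟨ay, ey, hy⟩ := hy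
      refine ⟨ax * ay, ex + ey, ?_⟩
      rw [hx, hy, map_mul]
      simp only [Pi.add_apply, pow_add, Finset.prod_mul_distrib]
      rw [mul_mul_mul_comm]
  refine ⟨Finset.image (fun e : ∀ g : {x // x ∈ s}, Fin (n g.1) => ∏ g : ↑s, (g : B) ^ (e g : ℕ))
    Finset.univ, ?_⟩
  intro x
  obtain ⟨a0, e, hx⟩ := key x
  refine ⟨∏ g : ↑s, (g : B) ^ (e g % n ↑g), ?_,
    a0 * ∏ g : ↑s, (a ↑g) ^ (e g / n ↑g), ?_⟩
  · exact Finset.mem_image_of_mem _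
      (Finset.mem_univ (fun g => (⟨e g % n ↑g, Nat.mod_lt _ (hn ↑g)⟩ : Fin (n g.1))))
  · rw [hx, map_mul, map_prod, mul_assoc]
    congr 1
    rw [← Finset.prod_mul_distrib]
    refine Finset.prod_congr rfl fun g _ => ?_
    rw [map_pow, ha, ← pow_mul, ← pow_add]
    congr 1
    exact (Nat.div_add_mod (e g) (n g.1)).symm
end

section
/- Let A →f B be a morphism of pointed commutative monoids such that f is finite (B = ⋃ᵢ f(A)·bᵢ for finitely many bᵢ) and B is cancellative. Then f is integral: for every b ∈ B there exists n ≥ 1 such that bⁿ lies in the image of A. -/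
/-- Let `f : A → B` be a morphism of pointed commutative monoids
which is finite (`B = ⋃ᵢ f(A)·bᵢ` for finitely many `bᵢ`) and such that `B` is
cancellative. Then `f` is integral: every `b ∈ B` has a power `bⁿ`, `n ≥ 1`,
lying in the image of `A`. -/
theorem finite_implies_integral {A B : Type*} [CommMonoidWithZero A]
    [CommMonoidWithZero B] (f : A →*₀ B) (t : Finset B)
    (hfin : ∀ x : B, ∃ b ∈ t, ∃ a : A, x = f a * b)
    (hcanc : ∀ a b c : B, a ≠ 0 → a * b = a * c → b = c) :
    ∀ b : B, ∃ n : ℕ, 1 ≤ n ∧ b ^ n ∈ Set.range f := by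
  intro b
  by_cases hb : b = 0
  · exact ⟨1, le_refl 1, 0, by simp [hb]⟩
  -- choose, for each x, an element g x ∈ t and a x ∈ A with b * x = f (a x) * g x
  choose g hg a ha using fun x : B => hfin (b * x)
  -- key computation: b ^ k * x = f c * g^[k] x for some c
  have key : ∀ (k : ℕ) (x : B), ∃ c : A, b ^ k * x = f c * g^[k] x := by
    intro k
    induction k with
    | zero => intro x; exact ⟨1, by simp⟩
    | succ k ih =>
      intro x
      obtain ⟨c, hc⟩ := ih (g x)
      refine ⟨a x * c, ?_⟩
      rw [Function.iterate_succ_apply, pow_succ, map_mul]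
      calc b ^ k * b * x = b ^ k * (b * x) := by rw [mul_assoc]
        _ = b ^ k * (f (a x) * g x) := by rw [ha x]
        _ = f (a x) * (b ^ k * g x) := by rw [mul_left_comm]
        _ = f (a x) * (f c * g^[k] (g x)) := by rw [hc]
        _ = f (a x) * f c * g^[k] (g x) := by rw [mul_assoc]
  -- starting point
  obtain ⟨b0, hb0t, a0, hab0⟩ := hfin b
  have hb0 : b0 ≠ 0 := by
    intro h; exact hb (by rw [hab0, h, mul_zero])
  -- all iterates are nonzero
  have hiter0 : ∀ k, g^[k] b0 ≠ 0 := by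
    intro k
    induction k with
    | zero => exact hb0
    | succ k ih =>
      rw [Function.iterate_succ_apply']
      intro h
      have h2 := ha (g^[k] b0)
      rw [h, mul_zero] at h2
      exact ih (hcanc b _ 0 hb (by rw [mul_zero]; exact h2))
  -- all iterates lie in t
  have hmem : ∀ k, g^[k] b0 ∈ t := by
    intro k
    cases k with
    | zero => exact hb0t
    | succ k => rw [Function.iterate_succ_apply']; exact hg _
  -- pigeonhole: two iterates coincide
  obtain ⟨j, -, k, -, hjk, heq⟩ :
      ∃ j ∈ Finset.range (t.card + 1), ∃ k ∈ Finset.range (t.card + 1),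
        j ≠ k ∧ g^[j] b0 = g^[k] b0 := by
    apply Finset.exists_ne_map_eq_of_card_lt_of_maps_to
      (s := Finset.range (t.card + 1)) (t := t)
    · simp
    · intro i _; exact hmem i
  -- WLOG j < k
  rcases lt_or_gt_of_ne hjk with h | h
  · obtain ⟨c, hc⟩ := key (k - j) (g^[j] b0)
    have hcycle : g^[k - j] (g^[j] b0) = g^[j] b0 := by
      rw [← Function.iterate_add_apply, Nat.sub_add_cancel h.le, ← heq]
    rw [hcycle] at hc
    refine ⟨k - j, Nat.le_sub_of_add_le (by omega), c, ?_⟩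
    exact (hcanc _ _ _ (hiter0 j) (by rw [mul_comm, hc, mul_comm])).symm
  · obtain ⟨c, hc⟩ := key (j - k) (g^[k] b0)
    have hcycle : g^[j - k] (g^[k] b0) = g^[k] b0 := by
      rw [← Function.iterate_add_apply, Nat.sub_add_cancel h.le, heq]
    rw [hcycle] at hc
    refine ⟨j - k, Nat.le_sub_of_add_le (by omega), c, ?_⟩
    exact (hcanc _ _ _ (hiter0 k) (by rw [mul_comm, hc, mul_comm])).symm
end

section
/- There exists a finitely generated pointed commutative monoid extension A ⊆ B that is finite but not integral. Specifically, let B be the pointed monoid generated by x, y subject to the relation y² = xy, and A the submonoid generated by x; then B = A ∪ A·y (so the extension is finite), but no power yⁿ (n ≥ 1) lies in A. -/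
/-!
Inside `ℕ × ℕ` (componentwise multiplication) take `x = (1, 2)` and `y = (0, 2)`; then
`y² = x·y = (0, 4)`, and the submonoid they generate, with a zero adjoined, is the required `B`.
The relation rewrites every `xᵐ yⁿ` with `n ≥ 1` to `x^(m+n-1) y`, so `B = A ∪ A·y`.
On the other hand the first projection sends `x` to `1` and `yⁿ` to `0`, so no `yⁿ` with `n ≥ 1`
is a power of `x`.
-/

theorem pow_mul_pow_succ_of_sq_eq_mul {M : Type*} [CommMonoid M] {x y : M} (h : y ^ 2 = x * y)
    (m n : ℕ) : x ^ m * y ^ (n + 1) = x ^ (m + n) * y := by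
  induction n generalizing m with
  | zero => simp
  | succ n ih =>
    calc x ^ m * y ^ (n + 2) = x ^ m * y ^ n * y ^ 2 := by rw [pow_add, mul_assoc]
      _ = x ^ (m + 1) * y ^ (n + 1) := by rw [h, pow_succ, pow_succ]; ac_rfl
      _ = x ^ (m + (n + 1)) * y := by rw [ih, add_right_comm, add_assoc]

namespace Submonoid

section Monoid

variable {M : Type*} [Monoid M]

theorem notMem_closure_singleton_of_map_ne_one {N F : Type*} [Monoid N] [FunLike F M N]
    [MonoidHomClass F M N] (f : F) {x z : M} (hx : f x = 1) (hz : f z ≠ 1) :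
    z ∉ closure {x} := by
  intro hmem
  obtain ⟨n, rfl⟩ := mem_closure_singleton.mp hmem
  simp [hx] at hz

theorem map_mem_closure_singleton_iff {N : Type*} [Monoid N] {f : M →* N}
    (hf : Function.Injective f) {x z : M} : f z ∈ closure {f x} ↔ z ∈ closure {x} := by
  simp only [mem_closure_singleton, ← map_pow, hf.eq_iff]

theorem mem_closure_pair_of_eq_or_eq_mul {x y a b : M} (ha : a ∈ closure {x})
    (hb : b = a ∨ b = a * y) : b ∈ closure {x, y} := by
  have ha' : a ∈ closure {x, y} := closure_mono (by simp) ha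
  rcases hb with rfl | rfl
  · exact ha'
  · exact mul_mem ha' (subset_closure (by simp))

theorem _root_.WithZero.eq_zero_or_exists_mem_closure_eq_or_eq_mul {x y : M}
    (hM : ∀ g : M, ∃ a : ℕ, g = x ^ a ∨ g = x ^ a * y) (b : WithZero M) :
    b = 0 ∨ ∃ a ∈ closure {(x : WithZero M)}, b = a ∨ b = a * y := by
  induction b using WithZero.recZeroCoe with
  | zero => exact Or.inl rfl
  | coe g =>
    obtain ⟨a, hg⟩ := hM g
    refine Or.inr ⟨(x : WithZero M) ^ a, pow_mem mem_closure_singleton_self a, ?_⟩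
    rcases hg with rfl | rfl
    · exact Or.inl (WithZero.coe_pow x a)
    · exact Or.inr (by rw [WithZero.coe_mul, WithZero.coe_pow])

end Monoid

section SqEqMul

variable {M : Type*} [CommMonoid M] {x y : M}

theorem exists_eq_pow_or_eq_pow_mul_of_sq_eq_mul (h : y ^ 2 = x * y) {z : M}
    (hz : z ∈ closure {x, y}) : ∃ a : ℕ, z = x ^ a ∨ z = x ^ a * y := by
  obtain ⟨m, n, rfl⟩ := (mem_closure_pair x y z).mp hz
  cases n with
  | zero => exact ⟨m, Or.inl (by simp)⟩
  | succ n => exact ⟨m + n, Or.inr (pow_mul_pow_succ_of_sq_eq_mul h m n)⟩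

theorem exists_eq_pow_or_eq_pow_mul_of_closure_pair (h : y ^ 2 = x * y)
    {x' y' : closure {x, y}} (hx : (x' : M) = x) (hy : (y' : M) = y) (g : closure {x, y}) :
    ∃ a : ℕ, g = x' ^ a ∨ g = x' ^ a * y' := by
  simp only [Subtype.ext_iff, SubmonoidClass.coe_pow, coe_mul, hx, hy]
  exact exists_eq_pow_or_eq_pow_mul_of_sq_eq_mul h g.2

end SqEqMul

end Submonoid

open Submonoid

/-- There is a finitely generated pointed commutative monoid
extension `A ⊆ B` that is finite but not integral: `B` is generated by two
elements `x, y` subject to `y² = x·y`, and `A` is the submonoid generated by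
`x`; then `B = A ∪ A·y` (the extension is finite), but no power `yⁿ` (`n ≥ 1`)
lies in `A` (it is not `0` and not a product of `x`'s). -/
theorem exists_finite_not_integral_extension :
    ∃ (B : Type) (_ : CommMonoidWithZero B) (x y : B),
      (∀ b : B, b = 0 ∨ b ∈ Submonoid.closure {x, y}) ∧
      y ^ 2 = x * y ∧
      (∀ b : B, b = 0 ∨ ∃ a ∈ Submonoid.closure {x}, b = a ∨ b = a * y) ∧
      (∀ n : ℕ, 1 ≤ n → y ^ n ≠ 0 ∧ y ^ n ∉ Submonoid.closure {x}) := by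
  let S := Submonoid.closure ({(1, 2), (0, 2)} : Set (ℕ × ℕ))
  let x : S := ⟨(1, 2), Submonoid.subset_closure (by simp)⟩
  let y : S := ⟨(0, 2), Submonoid.subset_closure (by simp)⟩
  have hxy : y ^ 2 = x * y := rfl
  have hfinite := WithZero.eq_zero_or_exists_mem_closure_eq_or_eq_mul
    (exists_eq_pow_or_eq_pow_mul_of_closure_pair (congrArg Subtype.val hxy) rfl rfl)
  refine ⟨WithZero S, inferInstance, x, y, fun b => (hfinite b).imp_right ?_,
    congrArg _ hxy, hfinite, fun n hn => ⟨?_, ?_⟩⟩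
  · rintro ⟨a, ha, hb⟩
    exact mem_closure_pair_of_eq_or_eq_mul ha hb
  · exact WithZero.coe_pow y n ▸ WithZero.coe_ne_zero
  · rw [← WithZero.coe_pow]
    refine (map_mem_closure_singleton_iff (f := WithZero.coeMonoidHom) (x := x) (z := y ^ n)
      WithZero.coe_injective).not.mpr ?_
    refine notMem_closure_singleton_of_map_ne_one ((MonoidHom.fst ℕ ℕ).comp S.subtype) rfl ?_
    simp [y, zero_pow (Nat.one_le_iff_ne_zero.mp hn)]
end

section
/- A valuation monoid V (a cancellative pointed commutative monoid such that for every nonzero α in the pointed group completion V⁺, either α ∈ V or α⁻¹ ∈ V) has no proper finite extensions inside V⁺: if V ⊆ B ⊆ V⁺ with B finite over V, then B = V. -/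
/-- A valuation monoid `V` (modelled as a submonoid, containing
`0`, of its pointed group completion `G = V⁺`, a commutative group with zero,
such that every nonzero `g ∈ G` satisfies `g ∈ V` or `g⁻¹ ∈ V`) has no proper
finite extensions inside `V⁺`: if `V ⊆ B ⊆ V⁺` with `B` finite over `V`, then
`B = V`. -/
theorem valuation_monoid_no_finite_extension {G : Type*} [CommGroupWithZero G]
    (V B : Submonoid G) (hV0 : (0 : G) ∈ V)
    (hval : ∀ g : G, g ≠ 0 → g ∈ V ∨ g⁻¹ ∈ V)
    (hVB : V ≤ B)
    (hfin : ∃ t : Finset G, ↑t ⊆ (B : Set G) ∧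
      ∀ x ∈ B, ∃ b ∈ t, ∃ v ∈ V, x = v * b) :
    B = V := by
  classical
  refine le_antisymm ?_ hVB
  intro x hx
  by_cases hx0 : x = 0
  · subst hx0; exact hV0
  obtain ⟨t, htB, ht⟩ := hfin
  -- In any finite nonempty set of nonzero elements there is a minimal one
  have key : ∀ s : Finset G, (∀ b ∈ s, b ≠ 0) → s.Nonempty →
      ∃ b ∈ s, ∀ b' ∈ s, b' * b⁻¹ ∈ V := by
    intro s
    induction s using Finset.induction_on with
    | empty => intro _ h; exact absurd h (by simp)
    | @insert a s ha ih =>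
      intro hne _
      have ha0 : a ≠ 0 := hne a (Finset.mem_insert_self a s)
      rcases s.eq_empty_or_nonempty with hs | hs
      · subst hs
        refine ⟨a, Finset.mem_insert_self a _, ?_⟩
        intro b' hb'
        simp only [Finset.mem_insert, Finset.notMem_empty, or_false] at hb'
        subst hb'
        simpa [mul_inv_cancel₀ ha0] using V.one_mem
      · obtain ⟨b, hb, hbmin⟩ := ih (fun c hc => hne c (Finset.mem_insert_of_mem hc)) hs
        have hb0 : b ≠ 0 := hne b (Finset.mem_insert_of_mem hb)
        rcases hval (a * b⁻¹) (by simp [ha0, hb0]) with hab | hab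
        · refine ⟨b, Finset.mem_insert_of_mem hb, ?_⟩
          intro b' hb'
          rcases Finset.mem_insert.mp hb' with rfl | hb'
          · exact hab
          · exact hbmin b' hb'
        · refine ⟨a, Finset.mem_insert_self a s, ?_⟩
          intro b' hb'
          have hba : b * a⁻¹ ∈ V := by
            simpa [mul_inv_rev, mul_comm] using hab
          rcases Finset.mem_insert.mp hb' with rfl | hb'
          · simpa [mul_inv_cancel₀ ha0] using V.one_mem
          · have : (b' * b⁻¹) * (b * a⁻¹) ∈ V := V.mul_mem (hbmin b' hb') hba
            have heq : (b' * b⁻¹) * (b * a⁻¹) = b' * a⁻¹ := by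
              field_simp
            rwa [heq] at this
  -- the nonzero elements of t
  set t₀ : Finset G := t.filter (· ≠ 0) with ht₀
  have ht₀ne : t₀.Nonempty := by
    obtain ⟨b, hb, v, hv, hxv⟩ := ht x hx
    refine ⟨b, Finset.mem_filter.mpr ⟨hb, ?_⟩⟩
    intro h0
    exact hx0 (by simp [hxv, h0])
  obtain ⟨b, hb, hbmin⟩ := key t₀ (fun c hc => (Finset.mem_filter.mp hc).2) ht₀ne
  have hbt : b ∈ t := (Finset.mem_filter.mp hb).1
  have hb0 : b ≠ 0 := (Finset.mem_filter.mp hb).2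
  have hbB : b ∈ B := htB hbt
  have hbxB : b * x ∈ B := B.mul_mem hbB hx
  obtain ⟨b', hb', w, hw, hbx⟩ := ht (b * x) hbxB
  have hbx0 : b * x ≠ 0 := mul_ne_zero hb0 hx0
  have hb'0 : b' ≠ 0 := by
    intro h0
    exact hbx0 (by simp [hbx, h0])
  have hb't₀ : b' ∈ t₀ := Finset.mem_filter.mpr ⟨hb', hb'0⟩
  have hmin : b' * b⁻¹ ∈ V := hbmin b' hb't₀
  have hxeq : x = w * (b' * b⁻¹) := by
    field_simp
    rw [mul_comm] at hbx
    rw [← hbx]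
  rw [hxeq]
  exact V.mul_mem hw hmin
end

section
/- For a cancellative pointed commutative monoid A, the map 𝔭 ↦ 𝔭_nor := {b ∈ A_nor | bⁿ ∈ 𝔭 for some n ≥ 1} is a bijection between the prime ideals of A and the prime ideals of its normalization A_nor, with inverse 𝔮 ↦ 𝔮 ∩ A; in particular 𝔭_nor ∩ A = 𝔭. -/
/-- A prime ideal of the (pointed) monoid with underlying set of elements `S`
inside an ambient commutative monoid with zero: a proper subset `P` of `S`
containing `0`, stable under multiplication by `S`, whose complement in `S` is
multiplicatively closed. -/
def IsPrimeOnSet {G : Type*} [CommMonoidWithZero G] (S P : Set G) : Prop :=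
  P ⊆ S ∧ (0 : G) ∈ P ∧ (∀ a ∈ S, ∀ x ∈ P, a * x ∈ P) ∧ P ≠ S ∧
    ∀ a ∈ S, ∀ b ∈ S, a * b ∈ P → a ∈ P ∨ b ∈ P

/-- The normalization of `A` inside the ambient group with zero:
all elements with a power (`n ≥ 1`) in `A`. -/
def monNor {G : Type*} [CommMonoidWithZero G] (A : Set G) : Set G :=
  {g : G | ∃ n : ℕ, 1 ≤ n ∧ g ^ n ∈ A}

/-- The prime `𝔭_nor` of the normalization associated to a prime `P` of `A`. -/
def primeNor {G : Type*} [CommMonoidWithZero G] (A P : Set G) : Set G :=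
  {g : G | g ∈ monNor A ∧ ∃ n : ℕ, 1 ≤ n ∧ g ^ n ∈ P}

/-- `monNor` is closed under arbitrary powers. -/
lemma monNor_pow_mem {G : Type*} [CommMonoidWithZero G] (A : Submonoid G)
    {g : G} (hg : g ∈ monNor (A : Set G)) (m : ℕ) :
    g ^ m ∈ monNor (A : Set G) := by
  obtain ⟨n, hn1, hn⟩ := hg
  rcases Nat.eq_zero_or_pos m with rfl | _
  · exact ⟨1, le_refl 1, by simpa using A.one_mem⟩
  · refine ⟨n, hn1, ?_⟩
    rw [← pow_mul, mul_comm m n, pow_mul]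
    exact pow_mem hn m

/-- If `a ∈ S`, `S` is power-closed, and `a ^ n ∈ P` for some `n ≥ 1`, then `a ∈ P`. -/
lemma prime_pow_descent {G : Type*} [CommMonoidWithZero G] {S P : Set G}
    (hP : IsPrimeOnSet S P) (hSpow : ∀ a ∈ S, ∀ m : ℕ, a ^ m ∈ S)
    {a : G} (ha : a ∈ S) : ∀ n : ℕ, 1 ≤ n → a ^ n ∈ P → a ∈ P := by
  intro n
  induction n with
  | zero => omega
  | succ k ih =>
    intro _ h
    rcases Nat.eq_zero_or_pos k with rfl | hk
    · simpa using h
    · rw [pow_succ] at h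
      rcases hP.2.2.2.2 _ (hSpow a ha k) a ha h with h' | h'
      · exact ih hk h'
      · exact h'

/-- A prime is closed under positive powers. -/
lemma prime_mem_pow {G : Type*} [CommMonoidWithZero G] {S P : Set G}
    (hP : IsPrimeOnSet S P) (hSpow : ∀ a ∈ S, ∀ m : ℕ, a ^ m ∈ S)
    {x : G} (hx : x ∈ P) : ∀ n : ℕ, 1 ≤ n → x ^ n ∈ P := by
  intro n
  induction n with
  | zero => omega
  | succ k ih =>
    intro _
    rcases Nat.eq_zero_or_pos k with rfl | hk
    · simpa using hx
    · rw [pow_succ]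
      exact hP.2.2.1 _ (hSpow x (hP.1 hx) k) x hx

/-- For a cancellative pointed commutative monoid `A` (modelled
as a submonoid, containing `0`, of its pointed group completion `G`, a
commutative group with zero generated by fractions of elements of `A`), the
map `𝔭 ↦ 𝔭_nor := {b ∈ A_nor | bⁿ ∈ 𝔭 for some n ≥ 1}` is a bijection between
the prime ideals of `A` and those of the normalization `A_nor`, with inverse
`𝔮 ↦ 𝔮 ∩ A`; in particular `𝔭_nor ∩ A = 𝔭`. -/
theorem normalization_prime_bijection {G : Type*} [CommGroupWithZero G]
    (A : Submonoid G) (hA0 : (0 : G) ∈ A)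
    (hgen : ∀ g : G, g ≠ 0 → ∃ a ∈ A, ∃ b ∈ A, b ≠ 0 ∧ g = a * b⁻¹) :
    (∀ P : Set G, IsPrimeOnSet (A : Set G) P →
        IsPrimeOnSet (monNor (A : Set G)) (primeNor (A : Set G) P) ∧
        primeNor (A : Set G) P ∩ (A : Set G) = P) ∧
    (∀ Q : Set G, IsPrimeOnSet (monNor (A : Set G)) Q →
        IsPrimeOnSet (A : Set G) (Q ∩ (A : Set G)) ∧
        primeNor (A : Set G) (Q ∩ (A : Set G)) = Q) := by
  have hApow : ∀ a ∈ (A : Set G), ∀ m : ℕ, a ^ m ∈ (A : Set G) :=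
    fun a ha m => pow_mem ha m
  have hNpow : ∀ a ∈ monNor (A : Set G), ∀ m : ℕ, a ^ m ∈ monNor (A : Set G) :=
    fun a ha m => monNor_pow_mem A ha m
  have hAsub : (A : Set G) ⊆ monNor (A : Set G) := fun a ha => ⟨1, le_refl 1, by simpa⟩
  constructor
  · intro P hP
    have hPA : P ⊆ (A : Set G) := hP.1
    -- membership of A in primeNor∩A means membership in P
    have hkey : ∀ a ∈ (A : Set G), ∀ n : ℕ, 1 ≤ n → a ^ n ∈ P → a ∈ P :=
      fun a ha => prime_pow_descent hP hApow ha
    have hcap : primeNor (A : Set G) P ∩ (A : Set G) = P := by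
      ext x
      constructor
      · rintro ⟨⟨-, n, hn1, hnP⟩, hxA⟩
        exact hkey x hxA n hn1 hnP
      · intro hx
        exact ⟨⟨hAsub (hPA hx), 1, le_refl 1, by simpa⟩, hPA hx⟩
    refine ⟨⟨fun x hx => hx.1, ?_, ?_, ?_, ?_⟩, hcap⟩
    · exact ⟨⟨1, le_refl 1, by simpa⟩, 1, le_refl 1, by simpa using hP.2.1⟩
    · rintro a ⟨m, hm1, hma⟩ x ⟨hxN, n, hn1, hnP⟩
      refine ⟨⟨m * n, le_mul_of_le_of_one_le hm1 hn1, ?_⟩, m * n,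
        le_mul_of_le_of_one_le hm1 hn1, ?_⟩
      · rw [mul_pow]
        have h1 : a ^ (m * n) ∈ (A : Set G) := by
          rw [pow_mul]; exact pow_mem hma n
        have h2 : x ^ (m * n) ∈ P := by
          rw [mul_comm m n, pow_mul]; exact prime_mem_pow hP hApow hnP m hm1
        exact mul_mem h1 (hPA h2)
      · rw [mul_pow]
        have h1 : a ^ (m * n) ∈ (A : Set G) := by
          rw [pow_mul]; exact pow_mem hma n
        have h2 : x ^ (m * n) ∈ P := by
          rw [mul_comm m n, pow_mul]; exact prime_mem_pow hP hApow hnP m hm1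
        exact hP.2.2.1 _ h1 _ h2
    · intro h
      have hne : P ≠ (A : Set G) := hP.2.2.2.1
      obtain ⟨a, haA, haP⟩ : ∃ a ∈ (A : Set G), a ∉ P := by
        by_contra hc
        push_neg at hc
        exact hne (Set.Subset.antisymm hPA hc)
      have : a ∈ primeNor (A : Set G) P := h ▸ hAsub haA
      obtain ⟨-, n, hn1, hnP⟩ := this
      exact haP (hkey a haA n hn1 hnP)
    · rintro a haN b hbN ⟨-, n, hn1, hnP⟩
      obtain ⟨m, hm1, hma⟩ := haN
      obtain ⟨k, hk1, hkb⟩ := hbN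
      have hN : 1 ≤ n * m * k := Nat.mul_pos (Nat.mul_pos hn1 hm1) hk1
      have hstep : (a * b) ^ (n * m * k) ∈ P := by
        rw [mul_assoc, pow_mul]
        exact prime_mem_pow hP hApow hnP _ (Nat.mul_pos hm1 hk1)
      rw [mul_pow] at hstep
      have haA : a ^ (n * m * k) ∈ (A : Set G) := by
        rw [mul_comm n m, mul_assoc, pow_mul]; exact pow_mem hma _
      have hbA : b ^ (n * m * k) ∈ (A : Set G) := by
        rw [mul_comm (n * m) k, pow_mul]; exact pow_mem hkb _
      rcases hP.2.2.2.2 _ haA _ hbA hstep with h | h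
      · exact Or.inl ⟨⟨m, hm1, hma⟩, n * m * k, hN, h⟩
      · exact Or.inr ⟨⟨k, hk1, hkb⟩, n * m * k, hN, h⟩
  · intro Q hQ
    have hkey : ∀ g ∈ monNor (A : Set G), ∀ n : ℕ, 1 ≤ n → g ^ n ∈ Q → g ∈ Q :=
      fun g hg => prime_pow_descent hQ hNpow hg
    constructor
    · refine ⟨fun x hx => hx.2, ⟨hQ.2.1, hA0⟩, ?_, ?_, ?_⟩
      · rintro a ha x ⟨hxQ, hxA⟩
        exact ⟨hQ.2.2.1 a (hAsub ha) x hxQ, mul_mem ha hxA⟩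
      · intro h
        obtain ⟨g, hgN, hgQ⟩ : ∃ g ∈ monNor (A : Set G), g ∉ Q := by
          by_contra hc
          push_neg at hc
          exact hQ.2.2.2.1 (Set.Subset.antisymm hQ.1 hc)
        obtain ⟨n, hn1, hnA⟩ := hgN
        have : g ^ n ∉ Q := fun hpow => hgQ (hkey g ⟨n, hn1, hnA⟩ n hn1 hpow)
        have hmem : g ^ n ∈ Q ∩ (A : Set G) := by rw [h]; exact hnA
        exact this hmem.1
      · rintro a ha b hb hab
        rcases hQ.2.2.2.2 a (hAsub ha) b (hAsub hb) hab.1 with h | h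
        · exact Or.inl ⟨h, ha⟩
        · exact Or.inr ⟨h, hb⟩
    · ext g
      constructor
      · rintro ⟨hgN, n, hn1, hnQ, -⟩
        exact hkey g hgN n hn1 hnQ
      · intro hg
        have hgN : g ∈ monNor (A : Set G) := hQ.1 hg
        obtain ⟨n, hn1, hnA⟩ := hgN
        have hgnQ : g ^ n ∈ Q := prime_mem_pow hQ hNpow hg n hn1
        exact ⟨⟨n, hn1, hnA⟩, n, hn1, hgnQ, hnA⟩
end

section
/- Let A be a finitely generated cancellative pointed commutative monoid. Then the normalization A_nor is finitely generated as a monoid; consequently A → A_nor is a finite morphism. -/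
/-!
Away from `0`, everything happens in the unit group `Gˣ`, which is a finitely generated abelian
group because `A` generates it. Projecting `Gˣ` onto the free part `ℤ^ι` of the structure theorem
has finite fibres. Gordan's argument then applies: if `x^n = ∏ y^(k y)` over the generators `y` of
`A`, dividing the exponents by `n` writes `x` as an element of `A` times a lattice point of the
zonotope `∑ [0,1]·y`; the image of such a point in `ℤ^ι` is bounded by `∑ |y|`, so there are
finitely many of them. Together with the generators of `A` they generate `A_nor`, and the same
division of exponents by the orders `n_y` shows `A_nor = ⋃ A·b` over the finitely many products
`b = ∏ y^(e y)` with `e y < n_y`.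
-/

open Finset

theorem Finset.prod_pow_eq_prod_pow_div_mul_prod_pow_mod {ι M : Type*} [CommMonoid M]
    (s : Finset ι) (f : ι → M) (k n : ι → ℕ) :
    ∏ i ∈ s, f i ^ k i = (∏ i ∈ s, (f i ^ n i) ^ (k i / n i)) * ∏ i ∈ s, f i ^ (k i % n i) := by
  rw [← prod_mul_distrib]
  exact prod_congr rfl fun i _ => by rw [← pow_mul, ← pow_add, Nat.div_add_mod]

theorem Int.abs_le_sum_abs_of_mul_eq_sum {ι : Type*} (s : Finset ι) {n : ℕ} (hn : 1 ≤ n)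
    {l : ι → ℕ} (hl : ∀ i ∈ s, l i ≤ n) {w : ι → ℤ} {z : ℤ}
    (h : n * z = ∑ i ∈ s, l i * w i) : |z| ≤ ∑ i ∈ s, |w i| := by
  refine Int.le_of_mul_le_mul_left ?_ (by omega : (0 : ℤ) < n)
  calc (n : ℤ) * |z| = |∑ i ∈ s, l i * w i| := by rw [← h, abs_mul, Nat.abs_cast]
    _ ≤ ∑ i ∈ s, l i * |w i| := by
      refine (abs_sum_le_sum_abs _ _).trans_eq (sum_congr rfl fun i _ => ?_)
      rw [abs_mul, Nat.abs_cast]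
    _ ≤ ∑ i ∈ s, n * |w i| :=
      sum_le_sum fun i hi => mul_le_mul_of_nonneg_right (by exact_mod_cast hl i hi) (abs_nonneg _)
    _ = n * ∑ i ∈ s, |w i| := (mul_sum _ _ _).symm

theorem CommGroup.exists_monoidHom_pi_int_finite_preimage (H : Type*) [CommGroup H]
    [Group.FG H] : ∃ (ι : Type) (_ : Fintype ι) (φ : H →* (ι → Multiplicative ℤ)),
      ∀ T : Set (ι → Multiplicative ℤ), T.Finite → (φ ⁻¹' T).Finite := by
  obtain ⟨κ, ι, _, _, p, hp, e, ⟨f⟩⟩ := CommGroup.equiv_free_prod_prod_multiplicative_zmod H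
  have : ∀ i, NeZero (p i ^ e i) := fun i => ⟨pow_ne_zero _ (hp i).ne_zero⟩
  refine ⟨ι, inferInstance, (MonoidHom.fst _ _).comp f.toMonoidHom, fun T hT => ?_⟩
  exact ((hT.prod Set.finite_univ).preimage f.injective.injOn).subset fun x hx => ⟨hx, trivial⟩

theorem Group.fg_of_forall_eq_mul_inv {H : Type*} [Group H] {A : Submonoid H} (hA : A.FG)
    (hgen : ∀ g : H, ∃ a ∈ A, ∃ b ∈ A, g = a * b⁻¹) : Group.FG H := by
  obtain ⟨s, rfl⟩ := hA
  have hle : Submonoid.closure (s : Set H) ≤ (Subgroup.closure (s : Set H)).toSubmonoid :=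
    Submonoid.closure_le.2 Subgroup.subset_closure
  refine Group.fg_iff.2 ⟨s, eq_top_iff.2 fun g _ => ?_, s.finite_toSet⟩
  obtain ⟨a, ha, b, hb, rfl⟩ := hgen g
  exact mul_mem (hle ha) (inv_mem (hle hb))

namespace Submonoid

section CommMonoid
variable {M N : Type*} [CommMonoid M] [CommMonoid N]

def normalization (A : Submonoid M) : Submonoid M where
  carrier := {x | ∃ n, 1 ≤ n ∧ x ^ n ∈ A}
  one_mem' := ⟨1, le_rfl, by simp⟩
  mul_mem' := by
    rintro x y ⟨n, hn, hx⟩ ⟨m, hm, hy⟩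
    refine ⟨n * m, Nat.one_le_iff_ne_zero.2 (by positivity), ?_⟩
    rw [mul_pow, pow_mul, pow_mul']
    exact mul_mem (pow_mem hx m) (pow_mem hy n)

theorem le_normalization (A : Submonoid M) : A ≤ A.normalization :=
  fun _ hx => ⟨1, le_rfl, by rwa [pow_one]⟩

theorem normalization_comap (A : Submonoid N) (f : M →* N) :
    (A.comap f).normalization = A.normalization.comap f := by
  ext x
  exact exists_congr fun n => and_congr_right fun _ => by rw [mem_comap, map_pow]

theorem exists_finset_forall_mem_closure_eq_mul (A : Submonoid M) (t : Finset M)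
    (ht : ↑t ⊆ (A.normalization : Set M)) :
    ∃ u : Finset M, ↑u ⊆ (closure (t : Set M) : Set M) ∧
      ∀ x ∈ closure (t : Set M), ∃ b ∈ u, ∃ a ∈ A, x = a * b := by
  classical
  choose n hn hnA using fun y : t => ht y.2
  refine ⟨(Fintype.piFinset fun y : t => range (n y)).image fun e => ∏ y : t, (y : M) ^ e y,
    ?_, fun x hx => ?_⟩
  · simp only [coe_image, Set.image_subset_iff]
    exact fun e _ => prod_mem _ fun y _ => pow_mem (subset_closure y.2) _
  · obtain ⟨k, rfl⟩ := mem_closure_finset'.1 hx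
    refine ⟨_, mem_image_of_mem _ (Fintype.mem_piFinset.2 fun y => mem_range.2
      (Nat.mod_lt (k y) (hn y))), _, prod_mem _ fun y _ => pow_mem (hnA y) (k y / n y),
      prod_pow_eq_prod_pow_div_mul_prod_pow_mod _ _ k n⟩

end CommMonoid

section GroupWithZero
variable {G : Type*} [GroupWithZero G]

theorem comap_coeHom_closure (s : Set G) :
    (closure s).comap (Units.coeHom G) = closure (Units.val ⁻¹' s) := by
  refine le_antisymm (fun u hu => ?_) (closure_le.2 fun u hu => subset_closure hu)
  suffices h : ∀ x (hx : x ∈ closure s) (hx0 : x ≠ 0),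
      Units.mk0 x hx0 ∈ closure (Units.val ⁻¹' s) by
    simpa using h u hu u.ne_zero
  intro x hx
  induction hx using closure_induction with
  | mem z hz => exact fun _ => subset_closure hz
  | one => exact fun _ => by rw [Units.mk0_one]; exact one_mem _
  | mul z w _ _ ihz ihw =>
    intro h0
    rw [Units.mk0_mul]
    exact mul_mem (ihz (left_ne_zero_of_mul h0)) (ihw (right_ne_zero_of_mul h0))

theorem exists_finset_of_fg_comap_coeHom {N : Submonoid G}
    (hN : (N.comap (Units.coeHom G)).FG) :
    ∃ t : Finset G, ↑t ⊆ (N : Set G) ∧ ∀ x ∈ N, x = 0 ∨ x ∈ closure (t : Set G) := by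
  classical
  obtain ⟨t, ht⟩ := hN
  refine ⟨t.image (Units.coeHom G), ?_, fun x hx => or_iff_not_imp_left.2 fun hx0 => ?_⟩
  · rw [coe_image, Set.image_subset_iff]
    exact fun y hy => (ht ▸ subset_closure hy : y ∈ N.comap (Units.coeHom G))
  · have hu := mem_map_of_mem (Units.coeHom G)
      (ht ▸ hx : Units.mk0 x hx0 ∈ closure (t : Set Gˣ))
    rwa [MonoidHom.map_mclosure, Units.coeHom_apply, Units.val_mk0, ← coe_image] at hu

end GroupWithZero

end Submonoid

section Zonotope
variable {H : Type*} [CommGroup H]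

open Submonoid

/-- The lattice points `∏ y ^ λ_y`, `0 ≤ λ_y ≤ 1`, of the zonotope spanned by `s`, with the
rational exponents cleared: `r ^ n = ∏ y ^ l_y` with `l_y ≤ n`. -/
def zonotope (s : Finset H) : Set H :=
  {r | ∃ n, 1 ≤ n ∧ ∃ l : H → ℕ, (∀ y ∈ s, l y ≤ n) ∧ r ^ n = ∏ y ∈ s, y ^ l y}

theorem zonotope_subset_normalization (s : Finset H) :
    zonotope s ⊆ (closure (s : Set H)).normalization := by
  rintro r ⟨n, hn, l, -, hr⟩
  exact ⟨n, hn, hr ▸ prod_mem _ fun y hy => pow_mem (subset_closure hy) _⟩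

theorem finite_zonotope [Group.FG H] (s : Finset H) : (zonotope s).Finite := by
  obtain ⟨ι, _, φ, hφ⟩ := CommGroup.exists_monoidHom_pi_int_finite_preimage H
  set C : ι → ℤ := fun i => ∑ y ∈ s, |(φ y i).toAdd|
  refine (hφ _ (Set.Finite.pi fun i => (Set.finite_Icc (-C i) (C i)).preimage
    Multiplicative.toAdd.injective.injOn)).subset ?_
  rintro r ⟨n, hn, l, hl, hr⟩
  simp only [Set.mem_preimage, Set.mem_pi, Set.mem_univ, Set.mem_Icc, ← abs_le, forall_const]
  exact fun i => Int.abs_le_sum_abs_of_mul_eq_sum s hn hl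
    (by simpa using congrArg (fun g => (φ g i).toAdd) hr)

theorem exists_mem_zonotope_mul_mem_closure (s : Finset H) {x : H} {n : ℕ} (hn : 1 ≤ n)
    (hx : x ^ n ∈ closure (s : Set H)) :
    ∃ r ∈ zonotope s, ∃ m ∈ closure (s : Set H), x = r * m := by
  obtain ⟨k, -, hk⟩ := mem_closure_finset.1 hx
  set m := ∏ y ∈ s, y ^ (k y / n)
  have hsplit : x ^ n = m ^ n * ∏ y ∈ s, y ^ (k y % n) := by
    rw [← hk, prod_pow_eq_prod_pow_div_mul_prod_pow_mod s _ k fun _ => n, ← prod_pow]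
    simp only [pow_right_comm _ n]
  refine ⟨x * m⁻¹, ⟨n, hn, fun y => k y % n, fun y _ => (Nat.mod_lt _ hn).le, ?_⟩,
    m, prod_mem _ fun y hy => pow_mem (subset_closure hy) _, (inv_mul_cancel_right x m).symm⟩
  rw [mul_pow, hsplit, inv_pow, mul_inv_cancel_comm]

theorem Submonoid.FG.normalization [Group.FG H] {A : Submonoid H} (hA : A.FG) :
    A.normalization.FG := by
  classical
  obtain ⟨s, rfl⟩ := hA
  refine ⟨s ∪ (finite_zonotope s).toFinset, le_antisymm ?_ fun x ⟨n, hn, hx⟩ => ?_⟩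
  · rw [closure_le, coe_union, Set.Finite.coe_toFinset, Set.union_subset_iff]
    exact ⟨subset_closure.trans (le_normalization _), zonotope_subset_normalization s⟩
  · obtain ⟨r, hr, m, hm, rfl⟩ := exists_mem_zonotope_mul_mem_closure s hn hx
    exact mul_mem (subset_closure (by simp [hr])) (closure_mono (by simp) hm)

end Zonotope

/-- Let `A` be a finitely generated cancellative pointed
commutative monoid (modelled as a submonoid, containing `0`, of its pointed
group completion `G`, a commutative group with zero generated by fractions of
elements of `A`). Then the normalization `A_nor` is finitely generated as a
pointed monoid; consequently the inclusion `A → A_nor` is a finite morphism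
(`A_nor` is a finite union of sets `A·bᵢ`). -/
theorem normalization_fg_and_finite {G : Type*} [CommGroupWithZero G]
    (A : Submonoid G) (hA0 : (0 : G) ∈ A)
    (hgen : ∀ g : G, g ≠ 0 → ∃ a ∈ A, ∃ b ∈ A, b ≠ 0 ∧ g = a * b⁻¹)
    (hfg : ∃ s : Finset G, ↑s ⊆ (A : Set G) ∧
      ∀ a ∈ A, a = 0 ∨ a ∈ Submonoid.closure (↑s : Set G)) :
    (∃ t : Finset G, ↑t ⊆ monNor (A : Set G) ∧
      ∀ x ∈ monNor (A : Set G), x = 0 ∨ x ∈ Submonoid.closure (↑t : Set G)) ∧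
    (∃ u : Finset G, ↑u ⊆ monNor (A : Set G) ∧
      ∀ x ∈ monNor (A : Set G), ∃ b ∈ u, ∃ a ∈ A, x = a * b) := by
  obtain ⟨s, hsA, hs⟩ := hfg
  set U := A.comap (Units.coeHom G)
  have hU : U = Submonoid.closure (Units.val ⁻¹' (s : Set G)) := by
    rw [← Submonoid.comap_coeHom_closure]
    ext u
    exact ⟨fun hu => (hs _ hu).resolve_left u.ne_zero, fun hu => Submonoid.closure_le.2 hsA hu⟩
  have hUfg : U.FG :=
    (Submonoid.fg_iff U).2 ⟨_, hU.symm, s.finite_toSet.preimage Units.val_injective.injOn⟩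
  have : Group.FG Gˣ := Group.fg_of_forall_eq_mul_inv hUfg fun u => by
    obtain ⟨a, ha, b, hb, hb0, hab⟩ := hgen u u.ne_zero
    have ha0 : a ≠ 0 := by rintro rfl; simp at hab
    exact ⟨Units.mk0 a ha0, ha, Units.mk0 b hb0, hb, Units.ext (by simpa using hab)⟩
  -- `(A.normalization : Set G)` is `monNor A` definitionally.
  obtain ⟨t, htN, hN⟩ := Submonoid.exists_finset_of_fg_comap_coeHom
    (Submonoid.normalization_comap A (Units.coeHom G) ▸ hUfg.normalization)
  obtain ⟨u, hut, hu⟩ := A.exists_finset_forall_mem_closure_eq_mul t htN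
  refine ⟨⟨t, htN, hN⟩, u, hut.trans (Submonoid.closure_le.2 htN), fun x hx => ?_⟩
  obtain ⟨b, hb, -⟩ := hu 1 (one_mem _)
  rcases hN x hx with rfl | hx
  · exact ⟨b, hb, 0, hA0, (zero_mul b).symm⟩
  · exact hu x hx
end

section
/- Every discrete valuation monoid V is isomorphic to U(V)_* ∧ ⟨t⟩, the smash product of its group of units with a basepoint adjoined and the free pointed monoid on one generator. Equivalently, every nonzero element of V can be written uniquely as u·πⁿ with u ∈ U(V), n ≥ 0, for any uniformizing parameter π. -/
/-- Every discrete valuation monoid `V` is isomorphic to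
`U(V)_* ∧ ⟨t⟩`; equivalently, every nonzero element of `V` can be written
uniquely as `u·πⁿ` with `u ∈ U(V)` and `n ≥ 0`, for any uniformizing
parameter `π`.  Here `V` is modelled via its pointed group completion `G`
(a commutative group with zero) together with its valuation
`ord : G → ℤ ∪ {∞}` (multiplicative, with `ord g = ∞` iff `g = 0`);
`V = {g | ord g ≥ 0}`, the units of `V` are the elements with `ord = 0`, and
a uniformizing parameter is an element with `ord π = 1`. -/
theorem dvm_unique_factorization {G : Type*} [CommGroupWithZero G]
    (ord : G → WithTop ℤ)
    (hmul : ∀ g h : G, ord (g * h) = ord g + ord h)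
    (htop : ∀ g : G, ord g = ⊤ ↔ g = 0)
    (π : G) (hπ : ord π = (1 : ℤ)) :
    ∀ g : G, g ≠ 0 → 0 ≤ ord g →
      ∃! un : G × ℕ, ord un.1 = 0 ∧ g = un.1 * π ^ un.2 := by
  have hπ0 : π ≠ 0 := by
    intro h; rw [← htop π, hπ] at h; exact (by simp at h)
  have hpow : ∀ k : ℕ, ord (π ^ k) = (k : ℤ) := by
    intro k
    induction k with
    | zero =>
      have h1 : ord 1 ≠ ⊤ := fun h => one_ne_zero ((htop 1).mp h)
      obtain ⟨a, ha⟩ := WithTop.ne_top_iff_exists.mp h1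
      have h2 := hmul 1 1
      rw [one_mul, ← ha] at h2
      have h3 : a = a + a := by exact_mod_cast h2
      have h4 : a = 0 := by omega
      rw [pow_zero, ← ha, h4]
      norm_num
    | succ n ih =>
      rw [pow_succ, hmul, ih, hπ]
      push_cast
      rfl
  intro g hg hge
  have hgt : ord g ≠ ⊤ := fun h => hg ((htop g).mp h)
  lift ord g to ℤ using hgt with a ha
  have ha0 : 0 ≤ a := by exact_mod_cast hge
  obtain ⟨m, rfl⟩ := Int.eq_ofNat_of_zero_le ha0
  refine ⟨⟨g * (π ^ m)⁻¹, m⟩, ⟨?_, ?_⟩, ?_⟩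
  · have h1 : ord (g * (π ^ m)⁻¹ * π ^ m) = ord (g * (π ^ m)⁻¹) + ord (π ^ m) :=
      hmul _ _
    rw [inv_mul_cancel_right₀ (pow_ne_zero m hπ0), ← ha, hpow] at h1
    have h2 : ord (g * (π ^ m)⁻¹) + ((m : ℤ) : WithTop ℤ) = 0 + ((m : ℤ) : WithTop ℤ) := by
      rw [← h1, zero_add]
    exact WithTop.add_right_cancel (by simp) h2
  · simp [inv_mul_cancel_right₀ (pow_ne_zero m hπ0)]
  · rintro ⟨u, k⟩ ⟨hu, hgu⟩
    dsimp only at hu hgu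
    have hk : ((k : ℤ) : WithTop ℤ) = ((m : ℤ) : WithTop ℤ) := by
      rw [← hpow k, ha, hgu, hmul, hu, zero_add]
    have hkm : k = m := by exact_mod_cast hk
    subst hkm
    have : u = g * (π ^ k)⁻¹ := by
      rw [hgu, mul_inv_cancel_right₀ (pow_ne_zero k hπ0)]
    simp [this]
end
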